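/- arXiv:2001.02648 — 2 statements merged into one kernel-verified Lean document; each statement's English description precedes it below -/
import Mathlib

section
/- Each growth class [f]∼ is a subsemigroup of Ω∞ under composition: if g ∼ f and h ∼ f, then g ∘ h ∼ f. -/
/-! If `g ≺ f^[k₁]` and `h ≺ f^[k₂]`, then eventually `g (h n) < f^[k₁] (h n) ≤ f^[k₁ + k₂] n`,
because `h n ≥ n` and `f^[k₁]` is monotone. Conversely `f ≺ g^[k₁] ≤ (g ∘ h)^[k₁] ≤ (g ∘ h)^[k₁ + k₂]`,
since `g ≤ g ∘ h` and iterates of a function above the identity increase with the exponent. -/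

def OmegaInf (g : ℕ → ℕ) : Prop := ∀ n : ℕ, n < g n ∧ g n ≤ g (n + 1)

def Prec (f g : ℕ → ℕ) : Prop := ∃ n₀ : ℕ, ∀ n > n₀, f n < g n

def SimGrowth (f g : ℕ → ℕ) : Prop := ∃ k : ℕ, Prec f (g^[k]) ∧ Prec g (f^[k])

namespace OmegaInf

variable {g h : ℕ → ℕ}

theorem id_le (hg : OmegaInf g) : id ≤ g := fun n => (hg n).1.le

theorem monotone (hg : OmegaInf g) : Monotone g := monotone_nat_of_le_succ fun n => (hg n).2

theorem comp (hg : OmegaInf g) (hh : OmegaInf h) : OmegaInf (g ∘ h) := fun n =>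
  ⟨(hh n).1.trans_le (hg.id_le _), hg.monotone (hh.monotone n.le_succ)⟩

end OmegaInf

namespace Prec

theorem trans_le {f g g' : ℕ → ℕ} (hfg : Prec f g) (hgg' : g ≤ g') : Prec f g' :=
  let ⟨n₀, hlt⟩ := hfg
  ⟨n₀, fun n hn => (hlt n hn).trans_le (hgg' n)⟩

theorem comp {g G h H : ℕ → ℕ} (hG : Monotone G) (hh : id ≤ h) (hgG : Prec g G)
    (hhH : Prec h H) : Prec (g ∘ h) (G ∘ H) := by
  obtain ⟨a, hga⟩ := hgG
  obtain ⟨b, hhb⟩ := hhH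
  refine ⟨max a b, fun n hn => ?_⟩
  calc g (h n) < G (h n) := hga _ ((le_max_left a b).trans_lt (hn.trans_le (hh n)))
    _ ≤ G (H n) := hG (hhb n ((le_max_right a b).trans_lt hn)).le

end Prec

/-- Each growth class [f]∼ is a subsemigroup of Ω∞ under composition:
if g ∼ f and h ∼ f then g ∘ h ∼ f. -/
theorem growth_class_subsemigroup (f g h : ℕ → ℕ)
    (hf : OmegaInf f) (hg : OmegaInf g) (hh : OmegaInf h)
    (h₁ : SimGrowth g f) (h₂ : SimGrowth h f) :
    SimGrowth (g ∘ h) f := by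
  obtain ⟨k₁, hgf, hfg⟩ := h₁
  obtain ⟨k₂, hhf, -⟩ := h₂
  refine ⟨k₁ + k₂, ?_, hfg.trans_le ?_⟩
  · rw [Function.iterate_add]
    exact hgf.comp (hf.monotone.iterate k₁) hh.id_le hhf
  · calc g^[k₁] ≤ (g ∘ h)^[k₁] :=
          hg.monotone.iterate_le_of_le (fun n => hg.monotone (hh.id_le n)) k₁
      _ ≤ (g ∘ h)^[k₁ + k₂] :=
          Function.monotone_iterate_of_id_le (hg.comp hh).id_le (k₁.le_add_right k₂)
end

section
/- Let g : ℕ → ℕ be non-decreasing with g(n) > n, and suppose the chunk E = {id, h, h²} where h is the disjoint-3-cycles permutation (h(3k)=3k+1, h(3k+1)=3k+2, h(3k+2)=3k). Then E is a g-chunk whenever g(n) ≥ n + 2 for all n, and for every n, any supp-morphism σₙ : E → Sₙ with σₙ agreeing with h on all l with h(l) ≤ n satisfies: if m is maximal with g(m) ≤ n, then the number of non-fixed points of σₙ(h)⁻²σₙ(h²) is at most n − m + 5, hence d_H(σₙ(h)², σₙ(h²)) ≤ (n − m + 5)/n. -/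
def BoundedBy (ρ : Equiv.Perm ℕ) (g : ℕ → ℕ) : Prop :=
  ∀ n m : ℕ, m ≤ n → ρ m ≤ g n

/-- Normalized Hamming distance on Sₙ, modelled as permutations of ℕ supported on
{0, …, n-1}. -/
noncomputable def dHn (n : ℕ) (g h : Equiv.Perm ℕ) : ℝ :=
  1 - ((Finset.range n).filter fun k => (g⁻¹ * h) k = k).card / n

/-!
Both `h` and `h²` move every point by at most two steps to the right. Hence `E` is a
`g`-chunk as soon as `g n ≥ n + 2`, and a supp-morphism `σ` agrees with `h` at `l` and at
`h l`, and with `h²` at `l`, whenever `l + 2 < n`; there `σ(h)⁻²σ(h²)` fixes `l`. So only the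
last three points of `{0, …, n-1}` can be moved, and `3 ≤ n - m + 5` because `m + 2 ≤ g m ≤ n`.
-/

open Equiv Finset

theorem boundedBy_of_apply_le_add {ρ : Perm ℕ} {g : ℕ → ℕ} {c : ℕ}
    (hg : ∀ n, n + c ≤ g n) (hρ : ∀ x, ρ x ≤ x + c) : BoundedBy ρ g :=
  fun n m hmn => (hρ m).trans <| (Nat.add_le_add_right hmn c).trans (hg n)

theorem dHn_eq_card_filter_ne_div {n : ℕ} (hn : 0 < n) (g h : Perm ℕ) :
    dHn n g h = (#{k ∈ range n | (g⁻¹ * h) k ≠ k} : ℝ) / n := by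
  have hsplit :
      (#{k ∈ range n | (g⁻¹ * h) k = k} : ℝ) + #{k ∈ range n | (g⁻¹ * h) k ≠ k} = n := by
    exact_mod_cast (card_filter_add_card_filter_not _).trans (card_range n)
  have hn' : (n : ℝ) ≠ 0 := by positivity
  rw [dHn, eq_div_iff hn', sub_mul, div_mul_cancel₀ _ hn']
  linarith

theorem inv_sq_mul_apply_eq_self {α : Type*} {σ τ ρ : Perm α} {l : α}
    (h₁ : σ l = ρ l) (h₂ : σ (ρ l) = ρ (ρ l)) (h₃ : τ l = (ρ ^ 2) l) :
    ((σ ^ 2)⁻¹ * τ) l = l := by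
  rw [Perm.mul_apply, Perm.inv_eq_iff_eq, h₃, sq, sq, Perm.mul_apply, Perm.mul_apply, h₁, h₂]

theorem card_filter_inv_sq_mul_ne_le {σ τ ρ : Perm ℕ} {n c : ℕ}
    (hρ : ∀ x, ρ x ≤ x + c) (hρ2 : ∀ x, (ρ ^ 2) x ≤ x + c)
    (hσ : ∀ l < n, ρ l < n → σ l = ρ l) (hτ : ∀ l < n, (ρ ^ 2) l < n → τ l = (ρ ^ 2) l) :
    #{l ∈ range n | ((σ ^ 2)⁻¹ * τ) l ≠ l} ≤ c + 1 := by
  have hsub : {l ∈ range n | ((σ ^ 2)⁻¹ * τ) l ≠ l} ⊆ Ico (n - (c + 1)) n := by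
    intro l hl
    rw [mem_filter, mem_range] at hl
    rw [mem_Ico]
    refine ⟨?_, hl.1⟩
    by_contra! hlc
    have hρρ : ρ (ρ l) = (ρ ^ 2) l := by rw [sq, Perm.mul_apply]
    have h₁ := hρ l
    have h₂ := hρ2 l
    exact hl.2 <| inv_sq_mul_apply_eq_self (hσ l (by omega) (by omega))
      (hσ (ρ l) (by omega) (by omega)) (hτ l (by omega) (by omega))
  exact (card_le_card hsub).trans (by rw [Nat.card_Ico]; omega)

def IsConsecutiveThreeCycles (h : Perm ℕ) : Prop :=
  ∀ k : ℕ, h (3 * k) = 3 * k + 1 ∧ h (3 * k + 1) = 3 * k + 2 ∧ h (3 * k + 2) = 3 * k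

namespace IsConsecutiveThreeCycles

theorem apply_le_add_two_and_sq_apply_le_add_two {h : Perm ℕ} (hh : IsConsecutiveThreeCycles h)
    (x : ℕ) : h x ≤ x + 2 ∧ (h ^ 2) x ≤ x + 2 := by
  obtain ⟨k, r, hr, rfl⟩ : ∃ k r, r < 3 ∧ x = 3 * k + r :=
    ⟨x / 3, x % 3, Nat.mod_lt _ (by norm_num), (Nat.div_add_mod x 3).symm⟩
  obtain ⟨h₀, h₁, h₂⟩ := hh k
  interval_cases r <;> simp [sq, h₀, h₁, h₂] <;> omega

theorem apply_le_add_two {h : Perm ℕ} (hh : IsConsecutiveThreeCycles h) (x : ℕ) : h x ≤ x + 2 :=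
  (hh.apply_le_add_two_and_sq_apply_le_add_two x).1

theorem sq_apply_le_add_two {h : Perm ℕ} (hh : IsConsecutiveThreeCycles h) (x : ℕ) :
    (h ^ 2) x ≤ x + 2 :=
  (hh.apply_le_add_two_and_sq_apply_le_add_two x).2

end IsConsecutiveThreeCycles

theorem three_cycle_chunk_example_general (g : ℕ → ℕ) (hg2 : ∀ n, n + 2 ≤ g n)
    (h : Equiv.Perm ℕ)
    (hdef : ∀ k : ℕ, h (3 * k) = 3 * k + 1 ∧ h (3 * k + 1) = 3 * k + 2 ∧
      h (3 * k + 2) = 3 * k)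
    (n : ℕ) (hn : 0 < n)
    (σ : Equiv.Perm ℕ → Equiv.Perm ℕ)
    (hσagree : ∀ ρ ∈ ({1, h, h ^ 2} : Set (Equiv.Perm ℕ)),
      ∀ l : ℕ, l < n → ρ l < n → σ ρ l = ρ l)
    (m : ℕ) (hm : g m ≤ n) :
    (∀ ρ ∈ ({1, h, h ^ 2} : Set (Equiv.Perm ℕ)), BoundedBy ρ g) ∧
    ((Finset.range n).filter fun l => (((σ h) ^ 2)⁻¹ * σ (h ^ 2)) l ≠ l).card ≤
      n - m + 5 ∧
    dHn n ((σ h) ^ 2) (σ (h ^ 2)) ≤ ((n : ℝ) - m + 5) / n := by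
  have hh : IsConsecutiveThreeCycles h := hdef
  have hcard : #{l ∈ range n | ((σ h ^ 2)⁻¹ * σ (h ^ 2)) l ≠ l} ≤ 3 :=
    card_filter_inv_sq_mul_ne_le hh.apply_le_add_two hh.sq_apply_le_add_two
      (hσagree h (by simp)) (hσagree (h ^ 2) (by simp))
  have hmn : m + 2 ≤ n := (hg2 m).trans hm
  refine ⟨?_, by omega, ?_⟩
  · rintro ρ (rfl | rfl | rfl)
    · exact boundedBy_of_apply_le_add hg2 fun x => by simp
    · exact boundedBy_of_apply_le_add hg2 hh.apply_le_add_two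
    · exact boundedBy_of_apply_le_add hg2 hh.sq_apply_le_add_two
  · rw [dHn_eq_card_filter_ne_div hn]
    have hmnR : (m : ℝ) + 2 ≤ n := by exact_mod_cast hmn
    have hcardR : (#{l ∈ range n | ((σ h ^ 2)⁻¹ * σ (h ^ 2)) l ≠ l} : ℝ) ≤ 3 := by
      exact_mod_cast hcard
    gcongr
    linarith

/-- For g non-decreasing with g(n) ≥ n + 2 > n and h the disjoint-3-cycles
permutation, the chunk E = {id, h, h²} is a g-chunk, and for any supp-morphism
σ : E → Sₙ (modelled inside Perm ℕ, fixing all k ≥ n and agreeing with each ρ ∈ E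
wherever possible), if m is maximal with g(m) ≤ n then σ(h)⁻²σ(h²) has at most
n − m + 5 non-fixed points among {0,…,n-1}, hence
d_H(σ(h)², σ(h²)) ≤ (n − m + 5)/n. -/
theorem three_cycle_chunk_example (g : ℕ → ℕ) (hmono : Monotone g)
    (hgt : ∀ n, n < g n) (hg2 : ∀ n, n + 2 ≤ g n)
    (h : Equiv.Perm ℕ)
    (hdef : ∀ k : ℕ, h (3 * k) = 3 * k + 1 ∧ h (3 * k + 1) = 3 * k + 2 ∧
      h (3 * k + 2) = 3 * k)
    (n : ℕ) (hn : 0 < n)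
    (σ : Equiv.Perm ℕ → Equiv.Perm ℕ)
    (hσ1 : σ 1 = 1)
    (hσsupp : ∀ ρ ∈ ({1, h, h ^ 2} : Set (Equiv.Perm ℕ)), ∀ k : ℕ, n ≤ k → σ ρ k = k)
    (hσagree : ∀ ρ ∈ ({1, h, h ^ 2} : Set (Equiv.Perm ℕ)),
      ∀ l : ℕ, l < n → ρ l < n → σ ρ l = ρ l)
    (m : ℕ) (hm : g m ≤ n) (hmax : ∀ m' : ℕ, g m' ≤ n → m' ≤ m) :
    (∀ ρ ∈ ({1, h, h ^ 2} : Set (Equiv.Perm ℕ)), BoundedBy ρ g) ∧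
    ((Finset.range n).filter fun l => (((σ h) ^ 2)⁻¹ * σ (h ^ 2)) l ≠ l).card ≤
      n - m + 5 ∧
    dHn n ((σ h) ^ 2) (σ (h ^ 2)) ≤ ((n : ℝ) - m + 5) / n :=
  three_cycle_chunk_example_general g hg2 h hdef n hn σ hσagree m hm
end
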